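/- For all real numbers x > 0 and μ ≥ 0, ∫_0^∞ (x/√(2π r³))·exp(−(x − μ r)²/(2r)) dr = 1. -/

import Mathlib

/-!
With `φ r = x / √r - μ √r` the exponent is `-φ(r)² / 2`, so the density is
`(2 / √(2π)) · x / (2 r √r) · g (φ r)` with `g u = exp (-u² / 2)`. The map `φ` is a decreasing
bijection of `(0, ∞)` onto `ℝ` (onto `(0, ∞)` if `μ = 0`) with
`|φ'(r)| = x / (2 r √r) + μ / (2 √r)`. The inversion `r ↦ (x / μ)² / r` negates `φ` and exchanges
the two summands of `|φ'|`, so for even `g` each of them carries half of `∫_ℝ g`.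
-/

open Real MeasureTheory Set Filter Topology

section

variable {a b : ℝ}

lemma div_sqrt_sub_mul_sqrt_sq {t : ℝ} (ht : 0 < t) :
    (a / √t - b * √t) ^ 2 = (a - b * t) ^ 2 / t := by
  have hs : √t ≠ 0 := (sqrt_pos.2 ht).ne'
  field_simp
  rw [sq_sqrt ht.le]
  ring

lemma hasDerivAt_div_sqrt_sub_mul_sqrt {t : ℝ} (ht : 0 < t) :
    HasDerivAt (fun t => a / √t - b * √t) (-(a / (2 * t * √t) + b / (2 * √t))) t := by
  have hs := hasDerivAt_sqrt ht.ne'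
  have : √t ≠ 0 := (sqrt_pos.2 ht).ne'
  refine (((hasDerivAt_const t a).div hs this).sub (hs.const_mul b)).congr_deriv ?_
  field_simp
  rw [sq_sqrt ht.le]
  ring

lemma strictAntiOn_div_sqrt_sub_mul_sqrt (ha : 0 < a) (hb : 0 ≤ b) :
    StrictAntiOn (fun t => a / √t - b * √t) (Ioi 0) := by
  intro s hs t _ hst
  have h := sqrt_lt_sqrt (le_of_lt hs) hst
  have : a / √t < a / √s := div_lt_div_of_pos_left ha (sqrt_pos.2 hs) h
  have : b * √s ≤ b * √t := mul_le_mul_of_nonneg_left h.le hb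
  linarith

lemma image_div_sqrt_sub_mul_sqrt_Ioi (ha : 0 < a) (hb : 0 < b) :
    (fun t => a / √t - b * √t) '' Ioi 0 = univ := by
  refine univ_subset_iff.mp (ContinuousOn.surjOn_of_tendsto' nonempty_Ioi ?_ ?_ ?_)
  · exact (continuousOn_const.div continuous_sqrt.continuousOn
      fun t ht => (sqrt_pos.2 ht).ne').sub (continuous_sqrt.continuousOn.const_mul b)
  · refine (tendsto_comp_coe_Ioi_atBot (f := fun t => a / √t - b * √t)).2 ?_
    have hsqrt : Tendsto (√·) (𝓝[>] 0) (𝓝[>] 0) :=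
      tendsto_nhdsWithin_of_tendsto_nhds_of_eventually_within _
        ((continuous_sqrt.tendsto' 0 0 sqrt_zero).mono_left nhdsWithin_le_nhds)
        (eventually_mem_nhdsWithin.mono fun t ht => sqrt_pos.2 ht)
    simp_rw [sub_eq_add_neg, div_eq_mul_inv]
    refine ((tendsto_inv_nhdsGT_zero.comp hsqrt).const_mul_atTop ha).atTop_add (C := 0) ?_
    simpa using ((continuous_sqrt.tendsto' 0 0 sqrt_zero).const_mul b).neg.mono_left
      nhdsWithin_le_nhds
  · refine (tendsto_comp_val_Ioi_atTop (f := fun t => a / √t - b * √t)).2 ?_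
    simp_rw [sub_eq_add_neg]
    exact (tendsto_const_nhds.div_atTop tendsto_sqrt_atTop).add_atBot
      (tendsto_neg_atTop_atBot.comp (tendsto_sqrt_atTop.const_mul_atTop hb))

lemma image_div_sqrt_Ioi (ha : 0 < a) : (fun t => a / √t) '' Ioi 0 = Ioi 0 := by
  ext y
  constructor
  · rintro ⟨t, ht, rfl⟩
    exact div_pos ha (sqrt_pos.2 ht)
  · intro (hy : 0 < y)
    refine ⟨(a / y) ^ 2, mem_Ioi.2 (by positivity), ?_⟩
    simp only [sqrt_sq (div_pos ha hy).le]
    field_simp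

lemma integral_image_div_sqrt_sub_mul_sqrt (ha : 0 < a) (hb : 0 ≤ b) (g : ℝ → ℝ) :
    ∫ u in (fun t => a / √t - b * √t) '' Ioi 0, g u =
      ∫ t in Ioi 0, (a / (2 * t * √t) + b / (2 * √t)) * g (a / √t - b * √t) := by
  rw [integral_image_eq_integral_abs_deriv_smul measurableSet_Ioi
    (fun t ht => (hasDerivAt_div_sqrt_sub_mul_sqrt ht).hasDerivWithinAt)
    (strictAntiOn_div_sqrt_sub_mul_sqrt ha hb).injOn]
  refine setIntegral_congr_fun measurableSet_Ioi fun t (ht : 0 < t) => ?_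
  rw [abs_neg, abs_of_nonneg (by positivity), smul_eq_mul]

lemma integrableOn_mul_comp_div_sqrt_sub_mul_sqrt (ha : 0 < a) (hb : 0 ≤ b) {g : ℝ → ℝ}
    (hg : IntegrableOn g ((fun t => a / √t - b * √t) '' Ioi 0)) :
    IntegrableOn (fun t => a / (2 * t * √t) * g (a / √t - b * √t)) (Ioi 0) ∧
      IntegrableOn (fun t => b / (2 * √t) * g (a / √t - b * √t)) (Ioi 0) := by
  rw [integrableOn_image_iff_integrableOn_abs_deriv_smul measurableSet_Ioi
    (fun t ht => (hasDerivAt_div_sqrt_sub_mul_sqrt ht).hasDerivWithinAt)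
    (strictAntiOn_div_sqrt_sub_mul_sqrt ha hb).injOn] at hg
  -- Each summand of the Jacobian is the Jacobian times a continuous weight with values in
  -- `[0, 1]`, namely `a / (a + b t)` or `b t / (a + b t)`.
  have hweighted {w : ℝ → ℝ} (hw : ContinuousOn w (Ioi 0)) (hw₀ : ∀ t ∈ Ioi 0, 0 ≤ w t)
      (hw₁ : ∀ t ∈ Ioi 0, w t ≤ 1) :
      IntegrableOn (fun t => w t * (|-(a / (2 * t * √t) + b / (2 * √t))| •
        g (a / √t - b * √t))) (Ioi 0) :=
    hg.bdd_mul (c := 1) (hw.aestronglyMeasurable measurableSet_Ioi) <|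
      (ae_restrict_iff' measurableSet_Ioi).2 <| .of_forall fun t ht => by
        rw [norm_of_nonneg (hw₀ t ht)]; exact hw₁ t ht
  have habs (t : ℝ) (ht : 0 < t) :
      |-(a / (2 * t * √t) + b / (2 * √t))| = (a + b * t) / (2 * t * √t) := by
    have : 0 < √t := sqrt_pos.2 ht
    rw [abs_neg, abs_of_nonneg (by positivity)]
    field_simp
  have hden : ContinuousOn (fun t : ℝ => a + b * t) (Ioi 0) := by fun_prop
  constructor
  · refine (hweighted (w := fun t => a / (a + b * t))
      (continuousOn_const.div hden fun t (ht : 0 < t) => by positivity)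
      (fun t (ht : 0 < t) => by positivity)
      (fun t (ht : 0 < t) => (div_le_one (by positivity)).2 (by nlinarith))).congr_fun
      (fun t (ht : 0 < t) => ?_) measurableSet_Ioi
    have : 0 < a + b * t := by positivity
    beta_reduce
    rw [habs t ht, smul_eq_mul, ← mul_assoc]
    field_simp
  · refine (hweighted (w := fun t => b * t / (a + b * t))
      ((continuousOn_const.mul continuousOn_id).div hden fun t (ht : 0 < t) => by positivity)
      (fun t (ht : 0 < t) => by positivity)
      (fun t (ht : 0 < t) => (div_le_one (by positivity)).2 (by linarith))).congr_fun
      (fun t (ht : 0 < t) => ?_) measurableSet_Ioi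
    have : 0 < a + b * t := by positivity
    have : 0 < √t := sqrt_pos.2 ht
    beta_reduce
    rw [habs t ht, smul_eq_mul, ← mul_assoc]
    field_simp

lemma integral_comp_const_div_Ioi {c : ℝ} (hc : 0 < c) (f : ℝ → ℝ) :
    ∫ t in Ioi 0, c / t ^ 2 * f (c / t) = ∫ t in Ioi 0, f t := by
  have himage : (c / ·) '' Ioi 0 = Ioi (0 : ℝ) := by
    ext y
    constructor
    · rintro ⟨t, ht, rfl⟩
      exact div_pos hc ht
    · exact fun (hy : 0 < y) => ⟨c / y, div_pos hc hy, div_div_cancel₀ hc.ne'⟩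
  have hinj : InjOn (c / ·) (Ioi (0 : ℝ)) := fun s _ t _ h => by
    simpa [div_div_cancel₀ hc.ne'] using congrArg (c / ·) h
  have hderiv (t : ℝ) (ht : t ∈ Ioi 0) :
      HasDerivWithinAt (c / ·) (-(c / t ^ 2)) (Ioi 0) t := by
    have := (hasDerivAt_inv (ne_of_gt ht)).const_mul c
    simp only [← div_eq_mul_inv, mul_neg] at this
    exact this.hasDerivWithinAt
  conv_rhs => rw [← himage, integral_image_eq_integral_abs_deriv_smul measurableSet_Ioi hderiv hinj]
  refine setIntegral_congr_fun measurableSet_Ioi fun t (ht : 0 < t) => ?_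
  rw [abs_neg, abs_of_pos (by positivity), smul_eq_mul]

lemma integral_mul_comp_div_sqrt_sub_mul_sqrt_symm (ha : 0 < a) (hb : 0 < b) {g : ℝ → ℝ}
    (hg : ∀ u, g (-u) = g u) :
    ∫ t in Ioi 0, a / (2 * t * √t) * g (a / √t - b * √t) =
      ∫ t in Ioi 0, b / (2 * √t) * g (a / √t - b * √t) := by
  rw [← integral_comp_const_div_Ioi (c := (a / b) ^ 2) (by positivity)]
  refine setIntegral_congr_fun measurableSet_Ioi fun t (ht : 0 < t) => ?_
  have hs : 0 < √t := sqrt_pos.2 ht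
  have hsqrt : √((a / b) ^ 2 / t) = a / b / √t := by
    rw [sqrt_div' _ ht.le, sqrt_sq (div_pos ha hb).le]
  have hsq : √t ^ 2 = t := sq_sqrt ht.le
  have hweight : (a / b) ^ 2 / t ^ 2 * (a / (2 * ((a / b) ^ 2 / t) * (a / b / √t))) =
      b / (2 * √t) := by
    field_simp
    rw [hsq]
  have harg : a / (a / b / √t) - b * (a / b / √t) = -(a / √t - b * √t) := by
    field_simp
    ring
  rw [hsqrt, ← mul_assoc, hweight, harg, hg]

theorem integral_Ioi_mul_comp_div_sqrt_sub_mul_sqrt (ha : 0 < a) (hb : 0 ≤ b) {g : ℝ → ℝ}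
    (hg : Integrable g) (heven : ∀ u, g (-u) = g u) :
    ∫ t in Ioi 0, a / (2 * t * √t) * g (a / √t - b * √t) = ∫ u in Ioi 0, g u := by
  obtain rfl | hb := hb.eq_or_lt
  · simpa [image_div_sqrt_Ioi ha] using (integral_image_div_sqrt_sub_mul_sqrt ha le_rfl g).symm
  · have hsum := integral_image_div_sqrt_sub_mul_sqrt ha hb.le g
    obtain ⟨hK, hL⟩ := integrableOn_mul_comp_div_sqrt_sub_mul_sqrt ha hb.le hg.integrableOn
    simp_rw [add_mul] at hsum
    rw [image_div_sqrt_sub_mul_sqrt_Ioi ha hb, Measure.restrict_univ, integral_add hK hL,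
      ← integral_mul_comp_div_sqrt_sub_mul_sqrt_symm ha hb heven] at hsum
    have hg_abs : ∫ u, g u = 2 * ∫ u in Ioi 0, g u := by
      rw [← integral_comp_abs]
      congr with u
      rcases abs_choice u with h | h <;> rw [h]
      exact (heven u).symm
    linarith

end

/-- The inverse Gaussian first-passage density integrates to one:
`∫_0^∞ (x/√(2π r³)) exp(−(x − μ r)²/(2r)) dr = 1` for `x > 0`, `μ ≥ 0`. -/
theorem inverse_gaussian_density_integral (x μ : ℝ) (hx : 0 < x) (hμ : 0 ≤ μ) :
    ∫ r in Set.Ioi (0 : ℝ),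
      x / Real.sqrt (2 * Real.pi * r ^ 3) * Real.exp (-(x - μ * r) ^ 2 / (2 * r)) = 1 := by
  have hdensity : ∀ r ∈ Ioi (0 : ℝ),
      x / √(2 * π * r ^ 3) * exp (-(x - μ * r) ^ 2 / (2 * r)) =
        2 / √(2 * π) * (x / (2 * r * √r) * exp (-(1 / 2) * (x / √r - μ * √r) ^ 2)) := by
    intro r (hr : 0 < r)
    have hroot : √(2 * π * r ^ 3) = √(2 * π) * (r * √r) := by
      rw [show 2 * π * r ^ 3 = 2 * π * (r ^ 2 * r) by ring, sqrt_mul (by positivity) (r ^ 2 * r),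
        sqrt_mul (sq_nonneg r) r, sqrt_sq hr.le]
    have : 0 < √r := sqrt_pos.2 hr
    rw [hroot, div_sqrt_sub_mul_sqrt_sq hr]
    field_simp
  rw [setIntegral_congr_fun measurableSet_Ioi hdensity, integral_const_mul,
    integral_Ioi_mul_comp_div_sqrt_sub_mul_sqrt hx hμ
      (integrable_exp_neg_mul_sq (by norm_num)) (fun u => by simp), integral_gaussian_Ioi]
  have : 0 < √(2 * π) := by positivity
  field_simp
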